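/- For any rooted graph G_* and any N ≥ 1, X_0(G_*;x_0,…,x_N) = (1/N)·Σ_{i=0}^{N} (0,i)•X_{≠0}(G_*;x_0,…,x_N) − X_{≠0}(G_*;x_0,…,x_N), where (0,i)• denotes the ring automorphism of ℚ[x_0,…,x_N] swapping the variables x_0 and x_i (the identity when i = 0). -/
import Mathlib


open MvPolynomial

attribute [local instance 10] Classical.propDecidable

/-- The finset of proper colorings of `G` with color set `Fin C`. -/
noncomputable def properColorings {V : Type} [Fintype V] (G : SimpleGraph V) (C : ℕ) :
    Finset (V → Fin C) :=
  Finset.univ.filter fun κ => ∀ u w, G.Adj u w → κ u ≠ κ w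

/-- `X_0(G_*; x_0,…,x_N)`: weighted sum over proper colorings with color set `{0,…,N}`
in which the root `r` gets color `0`. -/
noncomputable def X0 {V : Type} [Fintype V] (G : SimpleGraph V) (r : V) (N : ℕ) :
    MvPolynomial (Fin (N+1)) ℚ :=
  ∑ κ ∈ (properColorings G (N+1)).filter (fun κ => κ r = 0), ∏ v : V, X (κ v)

/-- `X_{≠0}(G_*; x_0,…,x_N)`: weighted sum over proper colorings with color set `{0,…,N}`
in which the root `r` does not get color `0`. -/
noncomputable def Xne0 {V : Type} [Fintype V] (G : SimpleGraph V) (r : V) (N : ℕ) :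
    MvPolynomial (Fin (N+1)) ℚ :=
  ∑ κ ∈ (properColorings G (N+1)).filter (fun κ => κ r ≠ 0), ∏ v : V, X (κ v)

lemma mem_proper_comp {V : Type} [Fintype V] (G : SimpleGraph V) (N : ℕ)
    (e : Equiv.Perm (Fin (N+1))) (κ : V → Fin (N+1)) (h : κ ∈ properColorings G (N+1)) :
    (e ∘ κ) ∈ properColorings G (N+1) := by
  simp only [properColorings, Finset.mem_filter, Finset.mem_univ, true_and] at h ⊢
  intro u w huw
  simpa using fun hh => h u w huw (e.injective hh)

lemma rename_Xne0 {V : Type} [Fintype V] (G : SimpleGraph V) (r : V) (N : ℕ)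
    (i : Fin (N+1)) :
    MvPolynomial.rename (Equiv.swap 0 i) (Xne0 G r N) =
      ∑ κ ∈ (properColorings G (N+1)).filter (fun κ => κ r ≠ i), ∏ v : V, X (κ v) := by
  unfold Xne0
  rw [map_sum]
  simp only [map_prod, rename_X]
  refine Finset.sum_nbij' (fun κ => (Equiv.swap 0 i) ∘ κ) (fun κ => (Equiv.swap 0 i) ∘ κ)
    ?_ ?_ ?_ ?_ ?_
  · intro κ hκ
    simp only [Finset.mem_filter] at hκ ⊢
    refine ⟨mem_proper_comp G N _ κ hκ.1, ?_⟩
    simp only [Function.comp_apply]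
    intro hh
    exact hκ.2 (by simpa using (Equiv.swap 0 i).injective (hh.trans (Equiv.swap_apply_left 0 i).symm))
  · intro κ hκ
    simp only [Finset.mem_filter] at hκ ⊢
    refine ⟨mem_proper_comp G N _ κ hκ.1, ?_⟩
    simp only [Function.comp_apply]
    intro hh
    apply hκ.2
    have := (Equiv.swap 0 i).injective ((Equiv.swap_apply_right 0 i).trans hh.symm)
    simpa using this.symm
  · intro κ _; funext v; simp
  · intro κ _; funext v; simp
  · intro κ _; rfl

/-- For any rooted graph `G_*` and `N ≥ 1`,
`X_0(G_*) = (1/N)·Σ_{i=0}^{N} (0,i)•X_{≠0}(G_*) − X_{≠0}(G_*)`, where `(0,i)•` is the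
automorphism of `ℚ[x_0,…,x_N]` swapping the variables `x_0` and `x_i`. -/
theorem stmt10 {V : Type} [Fintype V] [Nonempty V] (G : SimpleGraph V) (r : V)
    (N : ℕ) (hN : 1 ≤ N) :
    X0 G r N =
      ((N : ℚ)⁻¹) •
          (∑ i : Fin (N+1), MvPolynomial.rename (Equiv.swap 0 i) (Xne0 G r N))
        - Xne0 G r N := by
  set S : MvPolynomial (Fin (N+1)) ℚ :=
    ∑ κ ∈ properColorings G (N+1), ∏ v : V, X (κ v) with hS
  have hsplit : ∀ i : Fin (N+1),
      (∑ κ ∈ (properColorings G (N+1)).filter (fun κ => κ r = i), ∏ v : V, X (κ v)) +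
      (∑ κ ∈ (properColorings G (N+1)).filter (fun κ => κ r ≠ i), ∏ v : V, X (κ v)) = S := by
    intro i
    rw [hS, Finset.sum_filter_add_sum_filter_not]
  have hfiber : ∑ i : Fin (N+1),
      (∑ κ ∈ (properColorings G (N+1)).filter (fun κ => κ r = i), ∏ v : V, X (κ v)) = S := by
    rw [hS]
    have := Finset.sum_fiberwise (properColorings G (N+1)) (fun c => c r)
      (fun κ => ∏ v : V, (X (κ v) : MvPolynomial (Fin (N+1)) ℚ))
    convert this using 2 with i
  have hsum : ∑ i : Fin (N+1), MvPolynomial.rename (Equiv.swap 0 i) (Xne0 G r N)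
      = (N : ℚ) • S := by
    have : ∀ i : Fin (N+1),
        MvPolynomial.rename (Equiv.swap 0 i) (Xne0 G r N) =
        S - (∑ κ ∈ (properColorings G (N+1)).filter (fun κ => κ r = i), ∏ v : V, X (κ v)) := by
      intro i
      rw [rename_Xne0, ← hsplit i]
      ring
    rw [Finset.sum_congr rfl (fun i _ => this i), Finset.sum_sub_distrib, hfiber,
      Finset.sum_const, Finset.card_univ, Fintype.card_fin]
    rw [succ_nsmul]
    rw [← Nat.cast_smul_eq_nsmul ℚ]
    ring_nf
  have hX0 : X0 G r N = S - Xne0 G r N := by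
    rw [X0, Xne0, ← hsplit 0]
    ring
  rw [hX0, hsum, smul_smul, inv_mul_cancel₀ (by exact_mod_cast Nat.one_le_iff_ne_zero.mp hN), one_smul]
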